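/- For every real x and every t ≠ 0, the Dunkl–Appell polynomials satisfy the identity Σ_{i=1}^∞ (q_i(x)/γ_μ(i)) (i + 2μθ_i) t^{i−1} = x Q(t) e_μ(xt) + e_μ(−xt) (Λ_μ Q)(t) + Q'(t) (e_μ(xt) − e_μ(−xt)), where θ_i = 0 for even i and θ_i = 1 for odd i. -/

import Mathlib

/-!
Write `[n]_μ = n + 2μθ_n`, so that `γ_μ(n + 1) = [n + 1]_μ γ_μ(n)` and
`[j + k]_μ = [j]_μ + k + 2μ(-1)^j θ_k`. Multiplied by `t`, the left-hand side becomes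
`∑ [n]_μ q_n(x) tⁿ / γ_μ(n)`, and `q_n(x) tⁿ / γ_μ(n)` is the `n`-th Cauchy coefficient of
`e_μ(xt) Q(t)`. Splitting `[n]_μ` as above turns the series into three Cauchy products:
of `∑ [j]_μ (xt)ʲ / γ_μ(j) = xt e_μ(xt)` with `Q(t)`, of `e_μ(xt)` with
`∑ k c_k tᵏ / γ_μ(k) = t Q'(t)`, and of `e_μ(-xt)` with
`μ ∑ 2θ_k c_k tᵏ / γ_μ(k) = μ (Q(t) - Q(-t))`.
-/

open scoped BigOperators

/-- The Dunkl coefficients γ_μ(i). -/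
noncomputable def gammaMu (μ : ℝ) (i : ℕ) : ℝ :=
  if Even i then
    2 ^ i * (Nat.factorial (i / 2)) *
      Real.Gamma (((i / 2 : ℕ) : ℝ) + μ + 1 / 2) / Real.Gamma (μ + 1 / 2)
  else
    2 ^ i * (Nat.factorial (i / 2)) *
      Real.Gamma (((i / 2 : ℕ) : ℝ) + μ + 3 / 2) / Real.Gamma (μ + 1 / 2)

/-- θ_i = 0 if i is even, 1 if i is odd. -/
noncomputable def thetaFn (i : ℕ) : ℝ := if Even i then 0 else 1

/-- The Dunkl exponential e_μ(x) = Σ x^i / γ_μ(i). -/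
noncomputable def dunklExp (μ : ℝ) (x : ℝ) : ℝ := ∑' i : ℕ, x ^ i / gammaMu μ i

/-- The Dunkl operator (Λ_μ f)(x) = f'(x) + μ (f(x) - f(-x)) / x. -/
noncomputable def dunklOp (μ : ℝ) (f : ℝ → ℝ) (x : ℝ) : ℝ :=
  deriv f x + μ * (f x - f (-x)) / x

/-- Q(t) = Σ c_i t^i / γ_μ(i). -/
noncomputable def Qf (μ : ℝ) (c : ℕ → ℝ) (t : ℝ) : ℝ := ∑' i : ℕ, c i * t ^ i / gammaMu μ i

/-- The Dunkl–Appell polynomials q_i(x) = Σ_{j=0}^i (γ_μ(i)/(γ_μ(j)γ_μ(i-j))) c_{i-j} x^j. -/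
noncomputable def qPoly (μ : ℝ) (c : ℕ → ℝ) (i : ℕ) (x : ℝ) : ℝ :=
  ∑ j ∈ Finset.range (i + 1),
    gammaMu μ i / (gammaMu μ j * gammaMu μ (i - j)) * c (i - j) * x ^ j

/-- The operators K_n^μ(f;x). -/
noncomputable def Kop (μ : ℝ) (c : ℕ → ℝ) (n : ℕ) (f : ℝ → ℝ) (x : ℝ) : ℝ :=
  1 / (Qf μ c 1 * dunklExp μ (n * x)) *
    ∑' i : ℕ, qPoly μ c i (n * x) / gammaMu μ i * f (((i : ℝ) + 2 * μ * thetaFn i) / n)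


open Finset

theorem tsum_add_one_eq_tsum {M : Type*} [AddCommMonoid M] [TopologicalSpace M] {f : ℕ → M}
    (hf : f 0 = 0) : ∑' n, f (n + 1) = ∑' n, f n := by
  refine Nat.succ_injective.tsum_eq fun n hn => ?_
  cases n with
  | zero => exact absurd hf hn
  | succ m => exact ⟨m, rfl⟩

theorem nat_mul_pow_pred_mul_le {r R : ℝ} (hr : 0 ≤ r) (hrR : r ≤ R) (n : ℕ) :
    n * r ^ (n - 1) * R ≤ (2 * R) ^ n := by
  rcases n with _ | m
  · simp
  have hR : 0 ≤ R := hr.trans hrR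
  have hm : ((m : ℝ) + 1) ≤ 2 ^ (m + 1) := by
    exact_mod_cast (Nat.lt_two_pow_self (n := m + 1)).le
  calc ((m + 1 : ℕ) : ℝ) * r ^ (m + 1 - 1) * R ≤ 2 ^ (m + 1) * R ^ m * R := by
        push_cast
        gcongr
    _ = (2 * R) ^ (m + 1) := by ring

theorem hasDerivAt_tsum_mul_pow {𝕜 : Type*} [RCLike 𝕜]
    {a : ℕ → 𝕜} (ha : ∀ r : ℝ, Summable fun n => ‖a n‖ * r ^ n) (z : 𝕜) :
    HasDerivAt (fun w => ∑' n, a n * w ^ n) (∑' n, a n * (n * z ^ (n - 1))) z := by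
  set R := ‖z‖ + 1
  have hR : 0 < R := by positivity
  have hbound : ∀ n (w : 𝕜), w ∈ Metric.ball 0 R →
      ‖a n * (n * w ^ (n - 1))‖ ≤ ‖a n‖ * (2 * R) ^ n / R := by
    intro n w hw
    rw [mem_ball_zero_iff] at hw
    rw [le_div_iff₀ hR, norm_mul, norm_mul, norm_pow, RCLike.norm_natCast, mul_assoc]
    gcongr
    exact nat_mul_pow_pred_mul_le (norm_nonneg w) hw.le n
  refine hasDerivAt_tsum_of_isPreconnected ((ha (2 * R)).div_const R) Metric.isOpen_ball
    (convex_ball 0 R).isPreconnected (fun n w _ => (hasDerivAt_pow n w).const_mul (a n))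
    hbound (Metric.mem_ball_self hR) ?_ (by simp [R])
  exact ((ha 0).of_norm_bounded fun n => by simp [norm_mul]).of_norm

noncomputable def dunklNumber (μ : ℝ) (n : ℕ) : ℝ := n + 2 * μ * thetaFn n

theorem thetaFn_add (j k : ℕ) : thetaFn (j + k) = thetaFn j + (-1) ^ j * thetaFn k := by
  by_cases hj : Even j
  · by_cases hk : Even k <;> simp [thetaFn, Nat.even_add, hj, hk, hj.neg_one_pow]
  · by_cases hk : Even k <;>
      simp [thetaFn, Nat.even_add, hj, hk, (Nat.not_even_iff_odd.mp hj).neg_one_pow]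

theorem two_mul_thetaFn (n : ℕ) : 2 * thetaFn n = 1 - (-1) ^ n := by
  rcases Nat.even_or_odd n with h | h
  · simp [thetaFn, h, h.neg_one_pow]
  · norm_num [thetaFn, Nat.not_even_iff_odd.mpr h, h.neg_one_pow]

@[simp]
theorem dunklNumber_zero (μ : ℝ) : dunklNumber μ 0 = 0 := by
  simp [dunklNumber, thetaFn]

theorem dunklNumber_add (μ : ℝ) (j k : ℕ) :
    dunklNumber μ (j + k) = dunklNumber μ j + (k + 2 * μ * (-1) ^ j * thetaFn k) := by
  simp only [dunklNumber, thetaFn_add]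
  push_cast
  ring

theorem min_mul_le_dunklNumber (μ : ℝ) (n : ℕ) :
    min 1 (1 + 2 * μ) * n ≤ dunklNumber μ n := by
  have hn : (0 : ℝ) ≤ n := n.cast_nonneg
  unfold dunklNumber thetaFn
  split_ifs with h
  · nlinarith [min_le_left 1 (1 + 2 * μ)]
  · have hn1 : (1 : ℝ) ≤ n := by
      exact_mod_cast Nat.one_le_iff_ne_zero.mpr (by rintro rfl; exact h ⟨0, rfl⟩)
    rcases le_total μ 0 with hμ0 | hμ0
    · nlinarith [min_le_right 1 (1 + 2 * μ)]
    · nlinarith [min_le_left 1 (1 + 2 * μ)]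

section gammaMu

variable {μ : ℝ} (hμ : 0 < μ + 1 / 2)
include hμ

theorem min_one_one_add_two_mul_pos : 0 < min 1 (1 + 2 * μ) :=
  lt_min one_pos (by linarith)

theorem dunklNumber_succ_pos (n : ℕ) : 0 < dunklNumber μ (n + 1) :=
  (mul_pos (min_one_one_add_two_mul_pos hμ) (Nat.cast_pos.mpr n.succ_pos)).trans_le
    (min_mul_le_dunklNumber μ (n + 1))

theorem gammaMu_zero : gammaMu μ 0 = 1 := by
  simpa [gammaMu] using (Real.Gamma_pos_of_pos hμ).ne'

theorem gammaMu_succ (n : ℕ) : gammaMu μ (n + 1) = dunklNumber μ (n + 1) * gammaMu μ n := by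
  rcases Nat.even_or_odd' n with ⟨m, rfl | rfl⟩
  · have hodd : ¬Even (2 * m + 1) := Nat.not_even_iff_odd.mpr (odd_two_mul_add_one m)
    have hG := Real.Gamma_add_one (s := (m : ℝ) + μ + 1 / 2)
      (by linarith [m.cast_nonneg (α := ℝ)] : (0 : ℝ) < _).ne'
    simp only [gammaMu, dunklNumber, thetaFn, hodd, even_two_mul, if_true, if_false]
    rw [show (2 * m + 1) / 2 = m by omega, show 2 * m / 2 = m by omega,
      show (m : ℝ) + μ + 3 / 2 = (m : ℝ) + μ + 1 / 2 + 1 by ring, hG]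
    push_cast
    ring
  · have hodd : ¬Even (2 * m + 1) := Nat.not_even_iff_odd.mpr (odd_two_mul_add_one m)
    have heven : Even (2 * m + 1 + 1) := ⟨m + 1, by ring⟩
    simp only [gammaMu, dunklNumber, thetaFn, hodd, heven, if_true, if_false]
    rw [show (2 * m + 1 + 1) / 2 = m + 1 by omega, show (2 * m + 1) / 2 = m by omega,
      Nat.factorial_succ]
    push_cast
    ring_nf

theorem gammaMu_pos (n : ℕ) : 0 < gammaMu μ n := by
  induction n with
  | zero => simp [gammaMu_zero hμ]
  | succ n ih =>
    rw [gammaMu_succ hμ]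
    exact mul_pos (dunklNumber_succ_pos hμ n) ih

theorem pow_mul_factorial_le_gammaMu (n : ℕ) :
    min 1 (1 + 2 * μ) ^ n * n.factorial ≤ gammaMu μ n := by
  have hκ := min_one_one_add_two_mul_pos hμ
  induction n with
  | zero => simp [gammaMu_zero hμ]
  | succ n ih =>
    calc min 1 (1 + 2 * μ) ^ (n + 1) * (n + 1).factorial
        = (min 1 (1 + 2 * μ) * (n + 1 : ℕ)) * (min 1 (1 + 2 * μ) ^ n * n.factorial) := by
          push_cast [Nat.factorial_succ]
          ring
      _ ≤ dunklNumber μ (n + 1) * gammaMu μ n :=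
          mul_le_mul (min_mul_le_dunklNumber μ _) ih (by positivity) (dunklNumber_succ_pos hμ n).le
      _ = gammaMu μ (n + 1) := (gammaMu_succ hμ n).symm

theorem summable_abs_pow_div_gammaMu (y : ℝ) : Summable fun n => |y ^ n / gammaMu μ n| := by
  have hκ := min_one_one_add_two_mul_pos hμ
  refine (Real.summable_pow_div_factorial (|y| / min 1 (1 + 2 * μ))).of_nonneg_of_le
    (fun n => abs_nonneg _) fun n => ?_
  rw [abs_div, abs_pow, abs_of_pos (gammaMu_pos hμ n), div_pow, div_div]
  gcongr
  exact pow_mul_factorial_le_gammaMu hμ n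

theorem summable_abs_dunklNumber_mul_pow_div_gammaMu (y : ℝ) :
    Summable fun n => |dunklNumber μ n * (y ^ n / gammaMu μ n)| := by
  refine (summable_nat_add_iff 1).mp (((summable_abs_pow_div_gammaMu hμ y).mul_left |y|).congr
    fun n => ?_)
  rw [gammaMu_succ hμ, ← abs_mul, pow_succ]
  field_simp [(gammaMu_pos hμ n).ne', (dunklNumber_succ_pos hμ n).ne']

theorem tsum_dunklNumber_mul_pow_div_gammaMu (y : ℝ) :
    ∑' n, dunklNumber μ n * (y ^ n / gammaMu μ n) = y * dunklExp μ y := by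
  rw [← tsum_add_one_eq_tsum (by simp), dunklExp, ← tsum_mul_left]
  refine tsum_congr fun n => ?_
  rw [gammaMu_succ hμ, pow_succ]
  field_simp [(gammaMu_pos hμ n).ne', (dunklNumber_succ_pos hμ n).ne']

theorem qPoly_mul_pow_div_gammaMu (c : ℕ → ℝ) (n : ℕ) (x t : ℝ) :
    qPoly μ c n x * t ^ n / gammaMu μ n =
      ∑ p ∈ antidiagonal n, (x * t) ^ p.1 / gammaMu μ p.1 * (c p.2 * t ^ p.2 / gammaMu μ p.2) := by
  rw [Nat.sum_antidiagonal_eq_sum_range_succ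
    (fun j k => (x * t) ^ j / gammaMu μ j * (c k * t ^ k / gammaMu μ k)), qPoly, sum_mul, sum_div]
  refine sum_congr rfl fun j hj => ?_
  obtain ⟨k, rfl⟩ : ∃ k, n = j + k := ⟨n - j, by simp at hj; omega⟩
  rw [Nat.add_sub_cancel_left, pow_add, mul_pow]
  field_simp [(gammaMu_pos hμ j).ne', (gammaMu_pos hμ k).ne', (gammaMu_pos hμ (j + k)).ne']

end gammaMu

theorem dunklNumber_mul_qPoly {μ : ℝ} (hμ : 0 < μ + 1 / 2) (c : ℕ → ℝ) (n : ℕ) (x t : ℝ) :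
    dunklNumber μ n * (qPoly μ c n x * t ^ n / gammaMu μ n) =
      ∑ p ∈ antidiagonal n,
        (dunklNumber μ p.1 * ((x * t) ^ p.1 / gammaMu μ p.1) * (c p.2 * t ^ p.2 / gammaMu μ p.2) +
          (x * t) ^ p.1 / gammaMu μ p.1 * (p.2 * (c p.2 * t ^ p.2 / gammaMu μ p.2)) +
          μ * ((-(x * t)) ^ p.1 / gammaMu μ p.1) *
            (2 * thetaFn p.2 * (c p.2 * t ^ p.2 / gammaMu μ p.2))) := by
  rw [qPoly_mul_pow_div_gammaMu hμ, mul_sum]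
  refine sum_congr rfl fun p hp => ?_
  rw [← mem_antidiagonal.mp hp, dunklNumber_add, neg_pow (x * t)]
  ring

section Qf

variable {μ : ℝ} {c : ℕ → ℝ} (hQ : ∀ t : ℝ, Summable fun i : ℕ => |c i * t ^ i / gammaMu μ i|)
include hQ

theorem mul_deriv_Qf (t : ℝ) :
    t * deriv (Qf μ c) t = ∑' n, n * (c n * t ^ n / gammaMu μ n) := by
  have hQf : Qf μ c = fun s => ∑' n, c n / gammaMu μ n * s ^ n :=
    funext fun s => tsum_congr fun n => by ring
  have hsum : ∀ r : ℝ, Summable fun n => ‖c n / gammaMu μ n‖ * r ^ n := fun r =>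
    (hQ r).of_norm_bounded fun n => le_of_eq (by simp [abs_mul, abs_div]; ring)
  rw [hQf, (hasDerivAt_tsum_mul_pow hsum t).deriv, ← tsum_mul_left]
  refine tsum_congr fun n => ?_
  rcases n with _ | n
  · simp
  · push_cast
    ring

theorem Qf_sub_Qf_neg (t : ℝ) :
    Qf μ c t - Qf μ c (-t) = ∑' n, 2 * thetaFn n * (c n * t ^ n / gammaMu μ n) := by
  rw [Qf, Qf, ← (hQ t).of_abs.tsum_sub (hQ (-t)).of_abs]
  refine tsum_congr fun n => ?_
  rw [two_mul_thetaFn, neg_pow]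
  ring

theorem summable_abs_nat_mul_Qf_term (t : ℝ) :
    Summable fun n => |n * (c n * t ^ n / gammaMu μ n)| := by
  refine (hQ (2 * t)).of_nonneg_of_le (fun n => abs_nonneg _) fun n => ?_
  have hn : (n : ℝ) ≤ 2 ^ n := by exact_mod_cast (Nat.lt_two_pow_self (n := n)).le
  rw [show c n * (2 * t) ^ n / gammaMu μ n = 2 ^ n * (c n * t ^ n / gammaMu μ n) by ring,
    abs_mul, abs_mul, Nat.abs_cast, abs_of_pos (by positivity : (0 : ℝ) < 2 ^ n)]
  gcongr

theorem summable_abs_two_mul_thetaFn_mul_Qf_term (t : ℝ) :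
    Summable fun n => |2 * thetaFn n * (c n * t ^ n / gammaMu μ n)| := by
  refine ((hQ t).mul_left 2).of_nonneg_of_le (fun n => abs_nonneg _) fun n => ?_
  have hθ : |thetaFn n| ≤ 1 := by unfold thetaFn; split_ifs <;> norm_num
  rw [abs_mul, abs_mul, abs_two]
  gcongr
  exact mul_le_of_le_one_right zero_le_two hθ

end Qf

theorem mul_tsum_qPoly_eq {μ : ℝ} (hμ : 0 < μ + 1 / 2) {c : ℕ → ℝ}
    (hQ : ∀ t : ℝ, Summable fun i : ℕ => |c i * t ^ i / gammaMu μ i|) (x t : ℝ) :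
    t * ∑' i : ℕ, qPoly μ c (i + 1) x / gammaMu μ (i + 1) *
        (((i : ℝ) + 1) + 2 * μ * thetaFn (i + 1)) * t ^ i =
      x * t * Qf μ c t * dunklExp μ (x * t) + dunklExp μ (x * t) * (t * deriv (Qf μ c) t) +
        μ * dunklExp μ (-(x * t)) * (Qf μ c t - Qf μ c (-t)) := by
  set A : ℕ → ℝ := fun k => c k * t ^ k / gammaMu μ k
  set E : ℝ → ℕ → ℝ := fun y j => y ^ j / gammaMu μ j
  have h₁ : Summable fun j => ‖dunklNumber μ j * E (x * t) j‖ :=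
    summable_abs_dunklNumber_mul_pow_div_gammaMu hμ (x * t)
  have h₂ : Summable fun j => ‖E (x * t) j‖ := summable_abs_pow_div_gammaMu hμ (x * t)
  have h₃ : Summable fun j => ‖μ * E (-(x * t)) j‖ := by
    simpa only [Real.norm_eq_abs, abs_mul] using
      (summable_abs_pow_div_gammaMu hμ (-(x * t))).mul_left |μ|
  have h₁' : Summable fun k => ‖A k‖ := hQ t
  have h₂' : Summable fun k => ‖k * A k‖ := summable_abs_nat_mul_Qf_term hQ t
  have h₃' : Summable fun k => ‖2 * thetaFn k * A k‖ :=
    summable_abs_two_mul_thetaFn_mul_Qf_term hQ t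
  have s₁ := (summable_norm_sum_mul_antidiagonal_of_summable_norm h₁ h₁').of_norm
  have s₂ := (summable_norm_sum_mul_antidiagonal_of_summable_norm h₂ h₂').of_norm
  have s₃ := (summable_norm_sum_mul_antidiagonal_of_summable_norm h₃ h₃').of_norm
  calc _ = ∑' n, dunklNumber μ n * (qPoly μ c n x * t ^ n / gammaMu μ n) := by
        rw [← tsum_mul_left]
        refine (tsum_congr fun n => ?_).trans (tsum_add_one_eq_tsum (f := fun n =>
          dunklNumber μ n * (qPoly μ c n x * t ^ n / gammaMu μ n)) (by simp))
        simp only [dunklNumber]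
        push_cast
        ring
    _ = ∑' n, ∑ p ∈ antidiagonal n, (dunklNumber μ p.1 * E (x * t) p.1 * A p.2 +
          E (x * t) p.1 * (p.2 * A p.2) + μ * E (-(x * t)) p.1 * (2 * thetaFn p.2 * A p.2)) :=
        tsum_congr fun n => dunklNumber_mul_qPoly hμ c n x t
    _ = (∑' j, dunklNumber μ j * E (x * t) j) * (∑' k, A k) +
          (∑' j, E (x * t) j) * (∑' k, k * A k) +
          (∑' j, μ * E (-(x * t)) j) * (∑' k, 2 * thetaFn k * A k) := by
        rw [tsum_mul_tsum_eq_tsum_sum_antidiagonal_of_summable_norm h₁ h₁',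
          tsum_mul_tsum_eq_tsum_sum_antidiagonal_of_summable_norm h₂ h₂',
          tsum_mul_tsum_eq_tsum_sum_antidiagonal_of_summable_norm h₃ h₃', ← s₁.tsum_add s₂,
          ← (s₁.add s₂).tsum_add s₃]
        simp only [sum_add_distrib]
    _ = _ := by
        rw [tsum_dunklNumber_mul_pow_div_gammaMu hμ, mul_deriv_Qf hQ, Qf_sub_Qf_neg hQ,
          tsum_mul_left]
        simp only [dunklExp, Qf, A, E]
        ring

theorem dunklAppell_first_identity_general (μ : ℝ) (hμ : μ + 1 / 2 > 0) (c : ℕ → ℝ)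
    (hQ : ∀ t : ℝ, Summable fun i : ℕ => |c i * t ^ i / gammaMu μ i|)
    (x t : ℝ) (ht : t ≠ 0) :
    ∑' i : ℕ, qPoly μ c (i + 1) x / gammaMu μ (i + 1) *
        (((i : ℝ) + 1) + 2 * μ * thetaFn (i + 1)) * t ^ i =
      x * Qf μ c t * dunklExp μ (x * t) + dunklExp μ (-(x * t)) * dunklOp μ (Qf μ c) t +
        deriv (Qf μ c) t * (dunklExp μ (x * t) - dunklExp μ (-(x * t))) := by
  apply mul_left_cancel₀ ht
  rw [mul_tsum_qPoly_eq hμ hQ x t, dunklOp]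
  field_simp
  ring

/-- first derived identity for Dunkl–Appell polynomials. -/
theorem dunklAppell_first_identity (μ : ℝ) (hμ : μ + 1 / 2 > 0) (c : ℕ → ℝ) (hc0 : c 0 ≠ 0)
    (hQ : ∀ t : ℝ, Summable fun i : ℕ => |c i * t ^ i / gammaMu μ i|)
    (x t : ℝ) (ht : t ≠ 0) :
    ∑' i : ℕ, qPoly μ c (i + 1) x / gammaMu μ (i + 1) *
        (((i : ℝ) + 1) + 2 * μ * thetaFn (i + 1)) * t ^ i =
      x * Qf μ c t * dunklExp μ (x * t) + dunklExp μ (-(x * t)) * dunklOp μ (Qf μ c) t +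
        deriv (Qf μ c) t * (dunklExp μ (x * t) - dunklExp μ (-(x * t))) :=
  dunklAppell_first_identity_general μ hμ c hQ x t ht
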